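/- Let I be an information function on a category C with finite products and terminal object T. If f : A → C is a morphism and B any object, then I(f ∘ π_A) = I(f), where π_A : A × B → A is the projection. -/

import Mathlib

/-!
The product of `f` and `g` in the arrow category is `prod.map f g`, so external additivity reads
`I (prod.map f g) = I f + I g`. As arrows, `prod.map f (𝟙 ⊤) ≅ f`, whence `I (𝟙 ⊤) = 0`, and
destination matching gives `I (terminal.from B) = 0`. Finally `prod.fst ≫ f : A ⨯ B ⟶ X` is
isomorphic as an arrow to `prod.map f (terminal.from B) : A ⨯ B ⟶ X ⨯ ⊤`, so
`I (prod.fst ≫ f) = I f + I (terminal.from B) = I f`.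
-/

open CategoryTheory Limits

namespace CategoryTheory.Arrow

variable {C : Type*} [Category C] [HasBinaryProducts C]

noncomputable def prodMapFan {A X B Y : C} (f : A ⟶ X) (g : B ⟶ Y) :
    BinaryFan (Arrow.mk f) (Arrow.mk g) :=
  BinaryFan.mk (P := Arrow.mk (prod.map f g)) (homMk' prod.fst prod.fst) (homMk' prod.snd prod.snd)

noncomputable def prodMapFanIsLimit {A X B Y : C} (f : A ⟶ X) (g : B ⟶ Y) :
    IsLimit (prodMapFan f g) :=
  BinaryFan.IsLimit.mk _
    (fun u v => homMk (prod.lift u.left v.left) (prod.lift u.right v.right)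
      (prod.hom_ext (by simp [prodMapFan]) (by simp [prodMapFan])))
    (fun u v => by ext <;> exact prod.lift_fst _ _)
    (fun u v => by ext <;> exact prod.lift_snd _ _)
    (fun u v m hu hv => by
      subst hu hv
      ext <;> apply prod.hom_ext
      exacts [(prod.lift_fst _ _).symm, (prod.lift_snd _ _).symm,
        (prod.lift_fst _ _).symm, (prod.lift_snd _ _).symm])

noncomputable def prodMapIdTerminalIso [HasTerminal C] {A X : C} (f : A ⟶ X) :
    Arrow.mk (prod.map f (𝟙 (⊤_ C))) ≅ Arrow.mk f :=
  isoMk' _ _ (Limits.prod.rightUnitor A) (Limits.prod.rightUnitor X)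

noncomputable def prodMapToTerminalIso [HasTerminal C] {A X : C} (f : A ⟶ X) (B : C) :
    Arrow.mk (prod.map f (terminal.from B)) ≅ Arrow.mk ((prod.fst : A ⨯ B ⟶ A) ≫ f) :=
  isoMk' _ _ (Iso.refl _) (Limits.prod.rightUnitor X)

end CategoryTheory.Arrow

section InformationFunction

variable {C : Type*} [Category C] [HasBinaryProducts C] (I : ∀ ⦃X Y : C⦄, (X ⟶ Y) → ℝ)
  (invariance : ∀ {f g : Arrow C}, (f ≅ g) → I f.hom = I g.hom)
  (extAdd : ∀ (f g : Arrow C) (c : BinaryFan f g), IsLimit c →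
    I c.pt.hom = I f.hom + I g.hom)

include extAdd in
theorem info_prod_map {A X B Y : C} (f : A ⟶ X) (g : B ⟶ Y) :
    I (prod.map f g) = I f + I g :=
  extAdd _ _ _ (Arrow.prodMapFanIsLimit f g)

include invariance extAdd in
theorem info_id_terminal [HasTerminal C] : I (𝟙 (⊤_ C)) = 0 := by
  have hadd := info_prod_map I extAdd (𝟙 (⊤_ C)) (𝟙 (⊤_ C))
  have hiso : I (prod.map (𝟙 (⊤_ C)) (𝟙 (⊤_ C))) = I (𝟙 (⊤_ C)) :=
    invariance (Arrow.prodMapIdTerminalIso _)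
  linarith

include invariance extAdd in
theorem info_terminal_from [HasTerminal C] (nonneg : ∀ {X Y : C} (f : X ⟶ Y), 0 ≤ I f)
    (destMatch : ∀ {X Y : C} (f : X ⟶ Y), I f ≤ I (𝟙 Y)) (B : C) :
    I (terminal.from B) = 0 :=
  le_antisymm ((destMatch _).trans_eq (info_id_terminal I invariance extAdd)) (nonneg _)

end InformationFunction

theorem info_comp_proj_general {C : Type*} [Category C] [HasFiniteProducts C]
    (I : ∀ ⦃X Y : C⦄, (X ⟶ Y) → ℝ)
    (nonneg : ∀ {X Y : C} (f : X ⟶ Y), 0 ≤ I f)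
    (invariance : ∀ {f g : Arrow C}, (f ≅ g) → I f.hom = I g.hom)
    (extAdd : ∀ (f g : Arrow C) (c : BinaryFan f g), IsLimit c →
      I c.pt.hom = I f.hom + I g.hom)
    (destMatch : ∀ {X Y : C} (f : X ⟶ Y), I f ≤ I (𝟙 Y)) :
    ∀ {A X : C} (f : A ⟶ X) (B : C),
      I ((prod.fst : A ⨯ B ⟶ A) ≫ f) = I f := by
  intro A X f B
  calc I ((prod.fst : A ⨯ B ⟶ A) ≫ f)
      = I (prod.map f (terminal.from B)) := (invariance (Arrow.prodMapToTerminalIso f B)).symm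
    _ = I f + I (terminal.from B) := info_prod_map I extAdd f _
    _ = I f := by rw [info_terminal_from I invariance extAdd nonneg destMatch, add_zero]

theorem info_comp_proj {C : Type*} [Category C] [HasFiniteProducts C]
    (I : ∀ ⦃X Y : C⦄, (X ⟶ Y) → ℝ)
    (nonneg : ∀ {X Y : C} (f : X ⟶ Y), 0 ≤ I f)
    (invariance : ∀ {f g : Arrow C}, (f ≅ g) → I f.hom = I g.hom)
    (extAdd : ∀ (f g : Arrow C) (c : BinaryFan f g), IsLimit c →
      I c.pt.hom = I f.hom + I g.hom)
    (issa : ∀ {A : C} (f g h : Under A) (cfg : BinaryFan f g) (cgh : BinaryFan g h)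
      (cfgh : BinaryFan cfg.pt h), IsLimit cfg → IsLimit cgh → IsLimit cfgh →
      I cfgh.pt.hom ≤ I cfg.pt.hom + I cgh.pt.hom - I g.hom)
    (mono : ∀ {X Y Z : C} (f : X ⟶ Y) (g : Y ⟶ Z),
      I (f ≫ g) ≤ I f ∧ (I (f ≫ g) = I f ↔ ∃ s : Z ⟶ Y, f ≫ g ≫ s = f))
    (destMatch : ∀ {X Y : C} (f : X ⟶ Y), I f ≤ I (𝟙 Y)) :
    ∀ {A X : C} (f : A ⟶ X) (B : C),
      I ((prod.fst : A ⨯ B ⟶ A) ≫ f) = I f :=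
  info_comp_proj_general I nonneg invariance extAdd destMatch
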